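/- Spark lower bound via coherence: for a matrix Q with unit-norm columns and mutual coherence M > 0, every nonzero vector v in the null space of Q satisfies ‖v‖₀ ≥ 1 + 1/M. -/

import Mathlib

/-! Restricted to the support of `v`, the columns of `Q` are linearly dependent, so their Gram
matrix is singular. Its diagonal entries are `1` and its off-diagonal entries are bounded by the
coherence `M`, so by Gershgorin it cannot be strictly diagonally dominant: `1 ≤ (‖v‖₀ - 1) M`. -/

open scoped RealInnerProductSpace

noncomputable def matCol {d k : ℕ} (Q : Matrix (Fin d) (Fin k) ℝ) (j : Fin k) :
    EuclideanSpace ℝ (Fin d) := WithLp.toLp 2 (fun i => Q i j)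

noncomputable def mutualCoherenceU {d k : ℕ} (Q : Matrix (Fin d) (Fin k) ℝ) : ℝ :=
  sSup {x : ℝ | ∃ i j : Fin k, i ≠ j ∧ x = |⟪matCol Q i, matCol Q j⟫|}

noncomputable def l0norm {k : ℕ} (v : Fin k → ℝ) : ℕ := (Finset.univ.filter fun j => v j ≠ 0).card

open Finset Matrix
open scoped InnerProductSpace

theorem linearIndependent_of_card_sub_one_mul_lt_one {𝕜 E ι : Type*} [RCLike 𝕜]
    [NormedAddCommGroup E] [InnerProductSpace 𝕜 E] [Fintype ι] {q : ι → E} {M : ℝ}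
    (hq : ∀ i, ‖q i‖ = 1) (hM : ∀ i j, i ≠ j → ‖⟪q i, q j⟫_𝕜‖ ≤ M)
    (hlt : ((Fintype.card ι : ℝ) - 1) * M < 1) : LinearIndependent 𝕜 q := by
  classical
  refine linearIndependent_of_det_gram_ne_zero (det_ne_zero_of_sum_row_lt_diag fun k => ?_)
  calc ∑ j ∈ univ.erase k, ‖gram 𝕜 q k j‖
      ≤ ∑ j ∈ univ.erase k, M := sum_le_sum fun j hj => hM k j (ne_of_mem_erase hj).symm
    _ = ((Fintype.card ι : ℝ) - 1) * M := by
      rw [sum_const, card_erase_of_mem (mem_univ k), nsmul_eq_mul, card_univ,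
        Nat.cast_pred (Fintype.card_pos_iff.mpr ⟨k⟩)]
    _ < 1 := hlt
    _ = ‖gram 𝕜 q k k‖ := by simp [hq]

section Coherence

variable {d k : ℕ} (Q : Matrix (Fin d) (Fin k) ℝ)

theorem abs_inner_matCol_le_mutualCoherenceU {i j : Fin k} (hij : i ≠ j) :
    |⟪matCol Q i, matCol Q j⟫| ≤ mutualCoherenceU Q := by
  refine le_csSup ?_ ⟨i, j, hij, rfl⟩
  refine ((Set.finite_range fun p : Fin k × Fin k => |⟪matCol Q p.1, matCol Q p.2⟫|).subset
    ?_).bddAbove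
  rintro _ ⟨a, b, -, rfl⟩
  exact ⟨(a, b), rfl⟩

theorem mutualCoherenceU_nonneg : 0 ≤ mutualCoherenceU Q :=
  Real.sSup_nonneg fun _ ⟨_, _, _, hx⟩ => hx ▸ abs_nonneg _

theorem sum_smul_matCol (v : Fin k → ℝ) : ∑ j, v j • matCol Q j = WithLp.toLp 2 (Q *ᵥ v) := by
  ext i
  simp [matCol, mulVec, dotProduct, mul_comm]

variable {Q}

theorem not_linearIndependent_matCol_support {v : Fin k → ℝ} (hv : v ≠ 0) (hnull : Q *ᵥ v = 0) :
    ¬ LinearIndependent ℝ fun j : {j // v j ≠ 0} => matCol Q j := by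
  obtain ⟨j, hj⟩ := Function.ne_iff.mp hv
  rw [Fintype.linearIndependent_iff]
  push Not
  refine ⟨fun j => v j, ?_, ⟨j, hj⟩, hj⟩
  calc ∑ i : {j // v j ≠ 0}, v i • matCol Q i
      = ∑ j ∈ univ with v j ≠ 0, v j • matCol Q j :=
        (sum_subtype {j | v j ≠ 0} (by simp) fun j => v j • matCol Q j).symm
    _ = ∑ j, v j • matCol Q j := sum_filter_of_ne fun j _ h => left_ne_zero_of_smul h
    _ = 0 := by rw [sum_smul_matCol, hnull]; rfl

end Coherence

theorem spark_lower_bound_general {d k : ℕ} (Q : Matrix (Fin d) (Fin k) ℝ)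
    (hunit : ∀ j, ‖matCol Q j‖ = 1)
    (v : Fin k → ℝ) (hv : v ≠ 0) (hnull : Q.mulVec v = 0) :
    1 + 1 / mutualCoherenceU Q ≤ (l0norm v : ℝ) := by
  have hbound : 1 ≤ ((l0norm v : ℝ) - 1) * mutualCoherenceU Q := by
    by_contra! hlt
    rw [l0norm, ← Fintype.card_subtype] at hlt
    exact not_linearIndependent_matCol_support hv hnull <|
      linearIndependent_of_card_sub_one_mul_lt_one (fun j => hunit j)
        (fun i j hij => abs_inner_matCol_le_mutualCoherenceU Q (Subtype.coe_ne_coe.mpr hij)) hlt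
  have hM : 0 < mutualCoherenceU Q := (mutualCoherenceU_nonneg Q).lt_of_ne fun h => by
    rw [← h, mul_zero] at hbound
    exact zero_lt_one.not_ge hbound
  rw [one_div, ← le_sub_iff_add_le', inv_le_iff_one_le_mul₀ hM]
  exact hbound

theorem spark_lower_bound {d k : ℕ} (Q : Matrix (Fin d) (Fin k) ℝ)
    (hunit : ∀ j, ‖matCol Q j‖ = 1) (hM : 0 < mutualCoherenceU Q)
    (v : Fin k → ℝ) (hv : v ≠ 0) (hnull : Q.mulVec v = 0) :
    1 + 1 / mutualCoherenceU Q ≤ (l0norm v : ℝ) :=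
  spark_lower_bound_general Q hunit v hv hnull
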